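/- Fix δ ∈ (0,1) and let u = |x|+t, v = |x|-t on the region D(δ) = {1 < u < 3-δ, 1 < v < 3-δ} ⊂ ℝ^{n+1} with n ≥ 1. Let H(t,x) = ((u-1)/(3-δ-u)) · ((v-1)/(3-δ-v)). Then for every s > 0, at each point of the level set H⁻¹(s) the Minkowski gradient ∇H is spacelike, i.e. g(∇H, ∇H) > 0; in particular each level surface H⁻¹(s) is a timelike hypersurface. -/

import Mathlib

open RealInnerProductSpace

/-- The Minkowski gradient of `f : ℝ^{1+n} → ℝ`, obtained from `df` by raising the
index with the metric `g = -dt² + dx²`: `∇f = (-∂ₜ f, ∇ₓ f)`. -/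
noncomputable def minkGrad {n : ℕ} (f : ℝ × EuclideanSpace ℝ (Fin n) → ℝ)
    (p : ℝ × EuclideanSpace ℝ (Fin n)) : ℝ × EuclideanSpace ℝ (Fin n) :=
  (-(fderiv ℝ f p (1, 0)), gradient (fun y => f (p.1, y)) p.2)

/-- The Minkowski inner product `g = -dt² + dx²` on `ℝ^{1+n}`. -/
noncomputable def minkInner {n : ℕ} (X Y : ℝ × EuclideanSpace ℝ (Fin n)) : ℝ :=
  -(X.1 * Y.1) + ⟪X.2, Y.2⟫

/-!
In the null coordinates `u = |x| + t`, `v = |x| - t` of a spherically symmetric function,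
`g(∇H, ∇H) = -(∂ₜH)² + (∂ᵣH)² = -(∂ᵤH - ∂ᵥH)² + (∂ᵤH + ∂ᵥH)² = 4 ∂ᵤH ∂ᵥH`.
For `H = φ(u) φ(v)` with the Möbius map `φ(w) = (w - 1) / (3 - δ - w)`, which is positive and
increasing on `(1, 3 - δ)`, both `∂ᵤH = φ'(u) φ(v)` and `∂ᵥH = φ(u) φ'(v)` are positive on `D(δ)`.
-/

theorem hasFDerivAt_norm_of_ne_zero {E : Type*} [NormedAddCommGroup E] [InnerProductSpace ℝ E]
    {x : E} (hx : x ≠ 0) : HasFDerivAt (‖·‖) (‖x‖⁻¹ • innerSL ℝ x) x := by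
  have hsq : ‖x‖ ^ 2 ≠ 0 := by positivity
  convert (hasStrictFDerivAt_norm_sq x).hasFDerivAt.sqrt hsq using 1
  · simp [Real.sqrt_sq (norm_nonneg _)]
  · ext y
    simp only [smul_apply, coe_innerSL_apply, smul_eq_mul, Real.sqrt_sq (norm_nonneg x), one_div,
      mul_inv_rev, nsmul_eq_mul, Nat.cast_ofNat]
    field_simp

theorem hasDerivAt_sub_div_sub {a b w : ℝ} (hw : w ≠ b) :
    HasDerivAt (fun w => (w - a) / (b - w)) ((b - a) / (b - w) ^ 2) w := by
  refine (((hasDerivAt_id w).sub_const a).div ((hasDerivAt_id w).const_sub b)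
    (sub_ne_zero.2 hw.symm)).congr_deriv ?_
  simp only [id]
  ring

section Minkowski

variable {n : ℕ} {t : ℝ} {x : EuclideanSpace ℝ (Fin n)}

theorem minkInner_self (X : ℝ × EuclideanSpace ℝ (Fin n)) :
    minkInner X X = ‖X.2‖ ^ 2 - X.1 ^ 2 := by
  rw [minkInner, real_inner_self_eq_norm_sq]
  ring

theorem minkGrad_comp_radial {G : ℝ × ℝ → ℝ} {G' : ℝ × ℝ →L[ℝ] ℝ} (hx : x ≠ 0)
    (hG : HasFDerivAt G G' (t, ‖x‖)) :
    minkGrad (fun p => G (p.1, ‖p.2‖)) (t, x) = (-G' (1, 0), (G' (0, 1) * ‖x‖⁻¹) • x) := by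
  have hN := hasFDerivAt_norm_of_ne_zero hx
  have htime : HasFDerivAt (fun p : ℝ × EuclideanSpace ℝ (Fin n) => G (p.1, ‖p.2‖))
      (G'.comp ((ContinuousLinearMap.fst ℝ ℝ _).prod
        ((‖x‖⁻¹ • innerSL ℝ x).comp (ContinuousLinearMap.snd ℝ ℝ _)))) (t, x) :=
    hG.comp (t, x) (hasFDerivAt_fst.prodMk (hN.comp (t, x) hasFDerivAt_snd))
  have hspace : HasGradientAt (fun y => G (t, ‖y‖)) ((G' (0, 1) * ‖x‖⁻¹) • x) x := by
    refine hasGradientAt_iff_hasFDerivAt.2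
      ((hG.comp x ((hasFDerivAt_const t x).prodMk hN)).congr_fderiv ?_)
    ext y
    simp only [ContinuousLinearMap.comp_apply, ContinuousLinearMap.prod_apply, zero_apply,
      smul_apply, coe_innerSL_apply, smul_eq_mul, map_smul, InnerProductSpace.toDual_apply_apply]
    rw [show ((0 : ℝ), ‖x‖⁻¹ * ⟪x, y⟫) = (‖x‖⁻¹ * ⟪x, y⟫) • ((0 : ℝ), (1 : ℝ)) by simp,
      map_smul, smul_eq_mul]
    ring
  simp [minkGrad, htime.fderiv, hspace.gradient]

theorem minkInner_minkGrad_self_comp_radial {G : ℝ × ℝ → ℝ} {G' : ℝ × ℝ →L[ℝ] ℝ} (hx : x ≠ 0)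
    (hG : HasFDerivAt G G' (t, ‖x‖)) :
    minkInner (minkGrad (fun p => G (p.1, ‖p.2‖)) (t, x))
      (minkGrad (fun p => G (p.1, ‖p.2‖)) (t, x)) = G' (0, 1) ^ 2 - G' (1, 0) ^ 2 := by
  have hx' : ‖x‖ ≠ 0 := norm_ne_zero_iff.2 hx
  rw [minkGrad_comp_radial hx hG, minkInner_self, norm_smul, Real.norm_eq_abs, mul_pow, sq_abs]
  field_simp

theorem minkInner_minkGrad_self_mul_nullCoords {f g : ℝ → ℝ} {f' g' : ℝ} (hx : x ≠ 0)
    (hf : HasDerivAt f f' (‖x‖ + t)) (hg : HasDerivAt g g' (‖x‖ - t)) :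
    minkInner (minkGrad (fun p => f (‖p.2‖ + p.1) * g (‖p.2‖ - p.1)) (t, x))
      (minkGrad (fun p => f (‖p.2‖ + p.1) * g (‖p.2‖ - p.1)) (t, x))
      = 4 * (f' * g (‖x‖ - t)) * (f (‖x‖ + t) * g') := by
  have hu : HasFDerivAt (fun q : ℝ × ℝ => q.2 + q.1)
      (ContinuousLinearMap.snd ℝ ℝ ℝ + ContinuousLinearMap.fst ℝ ℝ ℝ) (t, ‖x‖) :=
    hasFDerivAt_snd.add hasFDerivAt_fst
  have hv : HasFDerivAt (fun q : ℝ × ℝ => q.2 - q.1)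
      (ContinuousLinearMap.snd ℝ ℝ ℝ - ContinuousLinearMap.fst ℝ ℝ ℝ) (t, ‖x‖) :=
    hasFDerivAt_snd.sub hasFDerivAt_fst
  have hG := (hf.comp_hasFDerivAt (t, ‖x‖) hu).mul (hg.comp_hasFDerivAt (t, ‖x‖) hv)
  refine (minkInner_minkGrad_self_comp_radial hx hG).trans ?_
  simp only [Function.comp_apply, smul_add, add_apply, smul_apply, sub_apply,
    ContinuousLinearMap.coe_snd', ContinuousLinearMap.coe_fst', sub_zero, smul_eq_mul, mul_one,
    mul_zero, add_zero, zero_sub, mul_neg, zero_add]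
  ring

end Minkowski

theorem foliation_level_sets_timelike_general (n : ℕ) (δ : ℝ)
    (u v H : ℝ × EuclideanSpace ℝ (Fin n) → ℝ)
    (hu : u = fun p => ‖p.2‖ + p.1)
    (hv : v = fun p => ‖p.2‖ - p.1)
    (hH : H = fun p => ((u p - 1) / (3 - δ - u p)) * ((v p - 1) / (3 - δ - v p)))
    (D : Set (ℝ × EuclideanSpace ℝ (Fin n)))
    (hD : D = {p | 1 < u p ∧ u p < 3 - δ ∧ 1 < v p ∧ v p < 3 - δ}) :
    ∀ s : ℝ, 0 < s → ∀ p ∈ D, H p = s →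
      0 < minkInner (minkGrad H p) (minkGrad H p) := by
  subst hu hv hH hD
  rintro s - ⟨t, x⟩ hp -
  obtain ⟨hu1, hu2, hv1, hv2⟩ :
      1 < ‖x‖ + t ∧ ‖x‖ + t < 3 - δ ∧ 1 < ‖x‖ - t ∧ ‖x‖ - t < 3 - δ := hp
  have hx : x ≠ 0 := by
    rintro rfl
    rw [norm_zero] at hu1 hv1
    linarith
  refine lt_of_lt_of_eq ?_ (minkInner_minkGrad_self_mul_nullCoords hx
    (f := fun w => (w - 1) / (3 - δ - w)) (g := fun w => (w - 1) / (3 - δ - w))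
    (hasDerivAt_sub_div_sub hu2.ne) (hasDerivAt_sub_div_sub hv2.ne)).symm
  have hφ_pos {w : ℝ} (h1 : 1 < w) (h2 : w < 3 - δ) : 0 < (w - 1) / (3 - δ - w) :=
    div_pos (by linarith) (by linarith)
  have hφ'_pos {w : ℝ} (h1 : 1 < w) (h2 : w < 3 - δ) : 0 < (3 - δ - 1) / (3 - δ - w) ^ 2 :=
    div_pos (by linarith) (pow_pos (by linarith) 2)
  exact mul_pos (mul_pos four_pos (mul_pos (hφ'_pos hu1 hu2) (hφ_pos hv1 hv2)))
    (mul_pos (hφ_pos hu1 hu2) (hφ'_pos hv1 hv2))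

/-- The level surfaces of the foliation function `H` are timelike: at every
point of a level set `H⁻¹(s)` with `s > 0`, the Minkowski gradient of `H` is
spacelike, `g(∇H, ∇H) > 0`. -/
theorem foliation_level_sets_timelike (n : ℕ) (hn : 1 ≤ n)
    (δ : ℝ) (hδ : 0 < δ) (hδ1 : δ < 1)
    (u v H : ℝ × EuclideanSpace ℝ (Fin n) → ℝ)
    (hu : u = fun p => ‖p.2‖ + p.1)
    (hv : v = fun p => ‖p.2‖ - p.1)
    (hH : H = fun p => ((u p - 1) / (3 - δ - u p)) * ((v p - 1) / (3 - δ - v p)))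
    (D : Set (ℝ × EuclideanSpace ℝ (Fin n)))
    (hD : D = {p | 1 < u p ∧ u p < 3 - δ ∧ 1 < v p ∧ v p < 3 - δ}) :
    ∀ s : ℝ, 0 < s → ∀ p ∈ D, H p = s →
      0 < minkInner (minkGrad H p) (minkGrad H p) :=
  foliation_level_sets_timelike_general n δ u v H hu hv hH D hD
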